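/- Let T be a planar rooted tree with signature s = (s(1),…,s(a)) and let μ = (μ(1),…,μ(a)) encode the s-Dyck path obtained from the preorder word of T (N for internal nodes, E for leaves). Define the area labeling of T: the root is labeled 0, and if an internal node labeled ℓ has children c_1,…,c_k listed left to right, then c_j is labeled ℓ + (k − j) (so the i-th child from the right gets label ℓ + i − 1). Then for every i ∈ [a], the area label of the i-th internal node of T in preorder equals Σ_{j=1}^{i−1}(s(j)−1) − Σ_{j=1}^{i−1} μ(j). -/
import Mathlib


/-- A planar rooted tree: a root together with a (possibly empty) ordered list of subtrees. -/
inductive PTree : Type where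
  | node : List PTree → PTree

namespace PTree

/-- The signature of a planar rooted tree: the numbers of children of its internal
nodes, listed in preorder. -/
def signature : PTree → List ℕ
  | node [] => []
  | node (t :: ts) =>
    (t :: ts).length :: ((t :: ts).attach.map (fun x => signature x.1)).flatten
decreasing_by
  have := List.sizeOf_lt_of_mem x.2
  simp at this ⊢
  omega

/-- The preorder word of a planar rooted tree: `true` (= N) for each internal node and
`false` (= E) for each leaf, nodes listed in preorder. -/
def word : PTree → List Bool
  | node ts => (!ts.isEmpty) :: (ts.attach.map (fun x => word x.1)).flatten
decreasing_by
  have := List.sizeOf_lt_of_mem x.2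
  simp at this ⊢
  omega

end PTree

/-- The word `N E^{μ(1)} N E^{μ(2)} ⋯ N E^{μ(a)} E` encoded by the sequence `μ`. -/
def pathWord (μ : List ℕ) : List Bool :=
  (μ.map (fun m => true :: List.replicate m false)).flatten ++ [false]

/-- `μ` encodes an `s`-Dyck path: it has length `a = ℓ(s)`, sum `|s| - a`, and its
partial sums are bounded by those of `s - 𝟏`. -/
def IsDyck (s μ : List ℕ) : Prop :=
  μ.length = s.length ∧ μ.sum + s.length = s.sum ∧
    ∀ i ≤ s.length, (μ.take i).sum ≤ ((s.take i).map (fun x => x - 1)).sum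

namespace PTree

mutual
/-- The list of area labels of the internal nodes of a tree, in preorder, when the root
is labeled `l` and the `i`-th child (from the right) of a node labeled `m` is labeled
`m + i - 1`. -/
def areaLabels : ℕ → PTree → List ℕ
  | _, node [] => []
  | l, node (t :: ts) => l :: areaLabelsList l ts.length (t :: ts)

/-- Auxiliary: area labels of a list of consecutive children, where the first child of
the list is labeled `l + d`, the next `l + d - 1`, and so on. -/
def areaLabelsList : ℕ → ℕ → List PTree → List ℕ
  | _, _, [] => []
  | l, d, t :: ts => areaLabels (l + d) t ++ areaLabelsList l (d - 1) ts
end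

end PTree

-- ================= auxiliary development =================
namespace AreaAux
open PTree

def sigF (F : List PTree) : List ℕ := (F.map PTree.signature).flatten
def wordF (F : List PTree) : List Bool := (F.map PTree.word).flatten

@[simp] lemma sigF_nil : sigF [] = [] := rfl
@[simp] lemma sigF_cons (t : PTree) (ts : List PTree) :
    sigF (t :: ts) = t.signature ++ sigF ts := by simp [sigF]
@[simp] lemma wordF_nil : wordF [] = [] := rfl
@[simp] lemma wordF_cons (t : PTree) (ts : List PTree) :
    wordF (t :: ts) = t.word ++ wordF ts := by simp [wordF]

lemma sig_nil : signature (node []) = [] := by rw [signature]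
lemma sig_cons (t : PTree) (ts : List PTree) :
    signature (node (t :: ts)) = (ts.length + 1) :: sigF (t :: ts) := by
  rw [signature, sigF, List.attach_map_val]
  simp

lemma word_eq (ts : List PTree) : word (node ts) = (!ts.isEmpty) :: wordF ts := by
  rw [word, wordF, List.attach_map_val]

lemma word_leaf : word (node []) = [false] := by rw [word_eq]; rfl
lemma word_cons (t : PTree) (ts : List PTree) :
    word (node (t :: ts)) = true :: wordF (t :: ts) := by rw [word_eq]; rfl

lemma aL_nil (l : ℕ) : areaLabels l (node []) = [] := by rw [areaLabels]
lemma aL_cons (l : ℕ) (t : PTree) (ts : List PTree) :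
    areaLabels l (node (t :: ts)) = l :: areaLabelsList l ts.length (t :: ts) := by
  rw [areaLabels]
@[simp] lemma aLL_nil (l d : ℕ) : areaLabelsList l d [] = [] := by rw [areaLabelsList]
lemma aLL_cons (l d : ℕ) (t : PTree) (ts : List PTree) :
    areaLabelsList l d (t :: ts) = areaLabels (l + d) t ++ areaLabelsList l (d - 1) ts := by
  rw [areaLabelsList]

def tpos : List Bool → List ℕ
  | [] => []
  | true :: w => 0 :: (tpos w).map (· + 1)
  | false :: w => (tpos w).map (· + 1)

lemma tpos_append (w1 w2 : List Bool) :
    tpos (w1 ++ w2) = tpos w1 ++ (tpos w2).map (· + w1.length) := by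
  induction w1 with
  | nil => simp [tpos]
  | cons b w ih =>
    cases b <;>
      simp [tpos, ih, List.map_map, Function.comp_def, Nat.add_assoc, Nat.add_comm 1]

lemma tpos_length (w : List Bool) : (tpos w).length = w.count true := by
  induction w with
  | nil => simp [tpos]
  | cons b w ih => cases b <;> simp [tpos, ih, List.count_cons]

lemma getD_map_add (L : List ℕ) (n k : ℕ) (h : k < L.length) :
    (L.map (· + n)).getD k 0 = L.getD k 0 + n := by
  rw [List.getD_eq_getElem _ _ (by simpa using h), List.getD_eq_getElem _ _ h,
    List.getElem_map]

end AreaAux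

namespace AreaAux
open PTree

theorem forest_lens : ∀ (F : List PTree) (l d : ℕ),
    (areaLabelsList l d F).length = (sigF F).length ∧
    (wordF F).length = (sigF F).sum + F.length ∧
    (wordF F).count true = (sigF F).length
  | [], l, d => by simp
  | node [] :: ts, l, d => by
    have ih := forest_lens ts l (d-1)
    simp [aLL_cons, aL_nil, sig_nil, word_leaf, ih.1, ih.2.1, ih.2.2]
    omega
  | node (u :: us) :: ts, l, d => by
    have ih1 := forest_lens (u :: us) (l + d) us.length
    have ih2 := forest_lens ts l (d-1)
    obtain ⟨a1, a2, a3⟩ := ih1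
    obtain ⟨b1, b2, b3⟩ := ih2
    simp [aLL_cons, aL_cons, sig_cons, word_cons, List.count_cons] at a1 a2 a3 b1 b2 b3 ⊢
    omega
  termination_by F => sizeOf F
  decreasing_by all_goals (simp; try omega)

theorem sig_pos : ∀ (F : List PTree), ∀ x ∈ sigF F, 1 ≤ x
  | [] => by simp
  | node [] :: ts => by
    have ih := sig_pos ts
    simpa [sig_nil] using ih
  | node (u :: us) :: ts => by
    have ih1 := sig_pos (u :: us)
    have ih2 := sig_pos ts
    intro x hx
    simp [sig_cons] at hx
    rcases hx with rfl | hx | hx | hx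
    · omega
    · exact ih1 x (by simp [hx])
    · exact ih1 x (by simp [hx])
    · exact ih2 x hx
  termination_by F => sizeOf F
  decreasing_by all_goals (simp; try omega)

end AreaAux

namespace AreaAux
open PTree

theorem forest_main : ∀ (F : List PTree) (l d k : ℕ), F.length ≤ d + 1 →
    k < (sigF F).length →
    (areaLabelsList l d F).getD k 0 + (tpos (wordF F)).getD k 0
      = ((sigF F).take k).sum + l + d
  | [], _, _, _, _, hk => by simp at hk
  | node [] :: ts, l, d, k, hF, hk => by
    simp only [List.length_cons] at hF
    have hk' : k < (sigF ts).length := by simpa [sig_nil] using hk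
    have hts : ts ≠ [] := by rintro rfl; simp at hk'
    have hd : 1 ≤ d := by have := List.length_pos_iff.mpr hts; omega
    have ih := forest_main ts l (d-1) k (by omega) hk'
    have hlen : k < (tpos (wordF ts)).length := by
      rw [tpos_length, (forest_lens ts l (d-1)).2.2]; exact hk'
    rw [aLL_cons, aL_nil, List.nil_append, wordF_cons, word_leaf, sigF_cons, sig_nil,
      List.nil_append, List.singleton_append]
    show _ + (tpos (false :: wordF ts)).getD k 0 = _
    rw [show tpos (false :: wordF ts) = (tpos (wordF ts)).map (· + 1) from by simp [tpos]]
    rw [getD_map_add _ _ _ hlen]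
    omega
  | node (u :: us) :: ts, l, d, k, hF, hk => by
    simp only [List.length_cons] at hF
    have lensG := forest_lens (u :: us) (l + d) us.length
    have lensTs := forest_lens ts l (d - 1)
    rw [sigF_cons, sig_cons] at hk
    simp only [List.cons_append, List.length_cons, List.length_append] at hk
    have htpG : (tpos (wordF (u :: us))).length = (sigF (u :: us)).length := by
      rw [tpos_length, lensG.2.2]
    have htpTs : (tpos (wordF ts)).length = (sigF ts).length := by
      rw [tpos_length, lensTs.2.2]
    rw [aLL_cons, aL_cons, wordF_cons, word_cons, sigF_cons, sig_cons]
    simp only [List.cons_append]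
    rw [show tpos (true :: (wordF (u :: us) ++ wordF ts)) =
        0 :: ((tpos (wordF (u :: us))).map (· + 1) ++
          ((tpos (wordF ts)).map (· + (wordF (u :: us)).length)).map (· + 1)) from by
      simp [tpos, tpos_append, List.map_append]; intros; omega]
    match k with
    | 0 => simp
    | (j+1) =>
      simp only [List.getD_cons_succ, List.take_succ_cons, List.sum_cons]
      by_cases hj : j < (sigF (u :: us)).length
      · have ih := forest_main (u :: us) (l + d) us.length j (by simp) hj
        rw [List.getD_append _ _ _ _ (by rw [lensG.1]; exact hj),
          List.getD_append _ _ _ _ (by rw [List.length_map, htpG]; exact hj),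
          getD_map_add _ _ _ (by rw [htpG]; exact hj),
          List.take_append, List.sum_append,
          show j - (sigF (u :: us)).length = 0 by omega, List.take_zero]
        simp only [List.sum_nil]
        omega
      · push_neg at hj
        have hi : j - (sigF (u :: us)).length < (sigF ts).length := by omega
        have hts : ts ≠ [] := by rintro rfl; simp at hi
        have hd : 1 ≤ d := by have := List.length_pos_iff.mpr hts; omega
        have ih := forest_main ts l (d-1) (j - (sigF (u :: us)).length) (by omega) hi
        have hwG := lensG.2.1
        simp only [List.length_cons] at hwG
        rw [List.getD_append_right _ _ _ _ (by rw [lensG.1]; exact hj),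
          List.getD_append_right _ _ _ _ (by rw [List.length_map, htpG]; exact hj),
          lensG.1, List.length_map, htpG,
          getD_map_add _ _ _ (by rw [List.length_map, htpTs]; exact hi),
          getD_map_add _ _ _ (by rw [htpTs]; exact hi),
          List.take_append, List.sum_append,
          List.take_of_length_le hj]
        omega
  termination_by F => sizeOf F
  decreasing_by all_goals (simp; try omega)

end AreaAux

namespace AreaAux
open PTree

lemma count_pathWord (μ : List ℕ) : (pathWord μ).count true = μ.length := by
  induction μ with
  | nil => simp [pathWord]
  | cons m μ ih =>
    simp only [pathWord] at ih ⊢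
    simp [List.count_append, List.count_cons, List.count_replicate] at ih ⊢
    omega

lemma tpos_replicate (m : ℕ) : tpos (List.replicate m false) = [] := by
  induction m with
  | zero => simp [tpos]
  | succ n ih => simp [List.replicate_succ, tpos, ih]

lemma pathWord_cons (m : ℕ) (μ : List ℕ) :
    pathWord (m :: μ) = true :: (List.replicate m false ++ pathWord μ) := by
  simp [pathWord]

lemma tpos_pathWord : ∀ (μ : List ℕ) (k : ℕ), k < μ.length →
    (tpos (pathWord μ)).getD k 0 = k + (μ.take k).sum := by
  intro μ
  induction μ with
  | nil => intro k hk; simp at hk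
  | cons m μ ih =>
    intro k hk
    rw [pathWord_cons]
    rw [show tpos (true :: (List.replicate m false ++ pathWord μ)) =
        0 :: ((tpos (pathWord μ)).map (· + m)).map (· + 1) from by
      simp [tpos, tpos_append, tpos_replicate]]
    match k with
    | 0 => simp
    | (j+1) =>
      have hj : j < μ.length := by simpa using Nat.lt_of_succ_lt_succ hk
      have hlen : j < (tpos (pathWord μ)).length := by
        rw [tpos_length, count_pathWord]; exact hj
      rw [List.getD_cons_succ, getD_map_add _ _ _ (by rw [List.length_map]; exact hlen),
        getD_map_add _ _ _ hlen, ih j hj, List.take_succ_cons, List.sum_cons]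
      omega

lemma sum_map_sub : ∀ (L : List ℕ), (∀ x ∈ L, 1 ≤ x) →
    (L.map (fun x => x - 1)).sum + L.length = L.sum := by
  intro L
  induction L with
  | nil => simp
  | cons a L ih =>
    intro h
    have ha := h a (by simp)
    have := ih (fun x hx => h x (by simp [hx]))
    simp only [List.map_cons, List.sum_cons, List.length_cons]
    omega

end AreaAux


open AreaAux PTree

/-- The area label of the `i`-th internal node of `T` in preorder equals
`Σ_{j<i}(s(j)-1) − Σ_{j<i} μ(j)`, where `s` is the signature of `T` and `μ` encodes the
Dyck path given by the preorder word of `T`.  (The equality is stated additively to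
stay within the natural numbers.) -/
theorem areaLabel_eq (T : PTree) (μ : List ℕ) (h : T.word = pathWord μ) :
    ∀ k < T.signature.length,
      (T.areaLabels 0).getD k 0 + (μ.take k).sum
        = ((T.signature.take k).map (fun x => x - 1)).sum := by
  intro k hk
  obtain ⟨_ | ⟨t, ts⟩⟩ := T
  · rw [sig_nil] at hk; simp at hk
  · have hcw : ((node (t :: ts)).word).count true = ((node (t :: ts)).signature).length := by
      rw [word_cons, sig_cons]
      have hc := (forest_lens (t :: ts) 0 0).2.2
      simp only [List.count_cons, List.length_cons, hc]
      simp
    have hμlen : μ.length = ((node (t :: ts)).signature).length := by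
      rw [← count_pathWord μ, ← h, hcw]
    have hk2 : k < μ.length := by rw [hμlen]; exact hk
    have htp : (tpos ((node (t :: ts)).word)).getD k 0 = k + (μ.take k).sum := by
      rw [h]; exact tpos_pathWord μ k hk2
    have hmain : ((node (t :: ts)).areaLabels 0).getD k 0
        + (tpos ((node (t :: ts)).word)).getD k 0
        = (((node (t :: ts)).signature).take k).sum := by
      rw [aL_cons, word_cons, sig_cons]
      rw [show tpos (true :: wordF (t :: ts)) = 0 :: (tpos (wordF (t :: ts))).map (· + 1)
        from by simp [tpos]]
      rw [sig_cons] at hk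
      simp only [List.length_cons] at hk
      match k, hk with
      | 0, _ => simp
      | (j+1), hk =>
        have hj : j < (sigF (t :: ts)).length := by omega
        have hjt : j < (tpos (wordF (t :: ts))).length := by
          rw [tpos_length, (forest_lens (t :: ts) 0 0).2.2]; exact hj
        rw [List.getD_cons_succ, List.getD_cons_succ, getD_map_add _ _ _ hjt,
          List.take_succ_cons, List.sum_cons]
        have ihm := forest_main (t :: ts) 0 ts.length j (by simp) hj
        omega
    have hpos : ∀ x ∈ ((node (t :: ts)).signature).take k, 1 ≤ x := by
      intro x hx
      have hx' := List.mem_of_mem_take hx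
      rw [sig_cons] at hx'
      rcases List.mem_cons.mp hx' with rfl | hx'
      · omega
      · exact sig_pos (t :: ts) x hx'
    have hsum := sum_map_sub _ hpos
    have hlt : (((node (t :: ts)).signature).take k).length = k := by
      rw [List.length_take]; omega
    rw [hlt] at hsum
    omega
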